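/- Let R be a Noetherian ring and F a finite R-module. Then F admits a filtration 0 = F₀ ⊆ F₁ ⊆ ⋯ ⊆ F_n = F such that each quotient F_{i+1}/F_i is isomorphic to a nonzero torsion-free rank-1 module over R/P_i for some prime ideal P_i which is an associated prime of F. -/

import Mathlib

/-! Induct on `Ann N` along reverse inclusion, which is well founded since `R` is Noetherian.
For `N ≠ 0` pick a prime `P` minimal over `Ann N`; it is an associated prime of `N`, hence of `F`.
The `P`-torsion `T` of `N` is finitely generated, so some `s ∉ P` kills it: `Ann T ⊋ Ann N`, and `T`
is filtered by induction. Above `T`, climb through submodules `C ⊆ N` that are `P`-saturated in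
`N`. If `C ≠ N`, every associated prime of `N / C` lies between `Ann N` and `P`, hence equals `P`;
this gives `x ∈ N \ C` with `P x ⊆ C`. The `P`-saturation of `C + R x` in `N` is the next
submodule, and its quotient by `C` embeds in `Frac (R / P)` via `y ↦ r / s` when `s y ≡ r x`. The
ascending chain condition ends the climb at `N`. -/

open CategoryTheory IsLocalRing

/-- The length of a module, as the Krull dimension of its lattice of submodules. -/
noncomputable def mlen (R M : Type) [Ring R] [AddCommGroup M] [Module R M] : WithBot ℕ∞ :=
  Order.krullDim (Submodule R M)

/-- `extM R M N n` is `Ext^n_R(M, N)`. -/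
noncomputable def extM (R : Type) [CommRing R] (M N : Type)
    [AddCommGroup M] [Module R M] [AddCommGroup N] [Module R N] (n : ℕ) : ModuleCat R :=
  ((Ext R (ModuleCat R) n).obj (Opposite.op (ModuleCat.of R M))).obj (ModuleCat.of R N)

/-- The length of the localization `M_P` over `R_P`. -/
noncomputable def locLen (R : Type) [CommRing R] (M : Type) [AddCommGroup M] [Module R M]
    (P : PrimeSpectrum R) : WithBot ℕ∞ :=
  mlen (Localization.AtPrime P.asIdeal) (LocalizedModule P.asIdeal.primeCompl M)

open Relation

theorem Relation.ReflTransGen.exists_relSeries {α : Type*} {r : α → α → Prop} {a b : α}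
    (h : ReflTransGen r a b) :
    ∃ s : RelSeries {p : α × α | r p.1 p.2}, s.head = a ∧ s.last = b := by
  induction h with
  | refl => exact ⟨.singleton _ a, rfl, rfl⟩
  | tail _ hbc ih =>
    obtain ⟨s, hs, rfl⟩ := ih
    exact ⟨s.snoc _ hbc, by simpa using hs, by simp⟩

variable {R F : Type*} [CommRing R] [AddCommGroup F] [Module R F]

/-- Encodes "`Q` is a nonzero `R ⧸ P`-module embedding into the fraction field of `R ⧸ P`". -/
def IsTorsionFreeRankOneOver (P : Ideal R) (Q : Type*) [AddCommGroup Q] [Module R Q] : Prop :=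
  Nontrivial Q ∧ (∀ r : R, r ∈ P → ∀ q : Q, r • q = 0) ∧
    (∀ r : R, r ∉ P → ∀ q : Q, r • q = 0 → q = 0) ∧
    (∀ x y : Q, ∃ a b : R, a ∉ P ∧ (a • x = b • y ∨ a • y = b • x))

theorem isTorsionFreeRankOneOver_of_generator {P : Ideal R} [P.IsPrime] {Q : Type*}
    [AddCommGroup Q] [Module R Q] {x : Q} (hx : x ≠ 0) (hPx : ∀ p ∈ P, p • x = 0)
    (htors : ∀ r ∉ P, ∀ q : Q, r • q = 0 → q = 0)
    (hgen : ∀ q : Q, ∃ s ∉ P, ∃ r : R, s • q = r • x) : IsTorsionFreeRankOneOver P Q := by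
  have hzero : ∀ q : Q, ∀ s ∉ P, ∀ r ∈ P, s • q = r • x → q = 0 := fun q s hs r hr h =>
    htors s hs q (by rw [h, hPx r hr])
  refine ⟨⟨x, 0, hx⟩, fun p hp q => ?_, htors, fun y z => ?_⟩
  · obtain ⟨s, hs, r, h⟩ := hgen q
    exact htors s hs _ (by rw [smul_comm, h, smul_comm, hPx p hp, smul_zero])
  obtain ⟨s, hs, r, hy⟩ := hgen y
  obtain ⟨t, ht, u, hz⟩ := hgen z
  by_cases hr : r ∈ P
  · exact ⟨1, 0, P.one_notMem, .inl (by rw [hzero y s hs r hr hy]; simp)⟩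
  by_cases hu : u ∈ P
  · exact ⟨1, 0, P.one_notMem, .inr (by rw [hzero z t ht u hu hz]; simp)⟩
  refine ⟨u * s, r * t, Ideal.IsPrime.mul_notMem ‹_› hu hs, .inl ?_⟩
  rw [mul_smul, mul_smul, hy, hz, smul_comm u r]

namespace Submodule

def saturation (S : Submonoid R) (D : Submodule R F) : Submodule R F :=
  (torsion' R (F ⧸ D) S).comap D.mkQ

variable {S : Submonoid R} {D N : Submodule R F} {y : F}

theorem mem_saturation : y ∈ D.saturation S ↔ ∃ s ∈ S, s • y ∈ D := by
  simp [saturation, mem_torsion'_iff, ← Quotient.mk_smul, Quotient.mk_eq_zero]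

theorem le_saturation : D ≤ D.saturation S :=
  fun y hy => mem_saturation.2 ⟨1, S.one_mem, by rwa [one_smul]⟩

theorem inf_saturation_inf_saturation_le :
    N ⊓ (N ⊓ D.saturation S).saturation S ≤ N ⊓ D.saturation S := by
  rintro y ⟨hyN, hy⟩
  obtain ⟨s, hs, -, hsy⟩ := mem_saturation.1 hy
  obtain ⟨t, ht, htsy⟩ := mem_saturation.1 hsy
  exact ⟨hyN, mem_saturation.2 ⟨t * s, S.mul_mem ht hs, by rwa [mul_smul]⟩⟩

end Submodule

open Submodule

def IsDevissageStep (A B : Submodule R F) : Prop :=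
  A ≤ B ∧ ∃ P ∈ associatedPrimes R F, IsTorsionFreeRankOneOver P (B ⧸ A.comap B.subtype)

theorem IsDevissageStep.lt {A B : Submodule R F} (h : IsDevissageStep A B) : A < B := by
  obtain ⟨hAB, P, -, hQ, -⟩ := h
  rw [Submodule.Quotient.nontrivial_iff, Ne, comap_subtype_eq_top] at hQ
  exact lt_of_le_not_ge hAB hQ

theorem isDevissageStep_inf_saturation_sup_span {P : Ideal R} [P.IsPrime]
    (hP : P ∈ associatedPrimes R F) {N C : Submodule R F} (hCN : C ≤ N)
    (hsat : N ⊓ C.saturation P.primeCompl ≤ C) {x : F} (hxN : x ∈ N) (hxC : x ∉ C)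
    (hPx : ∀ p ∈ P, p • x ∈ C) :
    IsDevissageStep C (N ⊓ (C ⊔ R ∙ x).saturation P.primeCompl) := by
  set C' := N ⊓ (C ⊔ R ∙ x).saturation P.primeCompl
  have hCC' : C ≤ C' := le_inf hCN (le_sup_left.trans le_saturation)
  have hxC' : x ∈ C' := ⟨hxN, le_saturation (mem_sup_right (mem_span_singleton_self x))⟩
  have hmk_zero {y : C'} : Submodule.Quotient.mk (p := C.comap C'.subtype) y = 0 ↔ (y : F) ∈ C :=
    Submodule.Quotient.mk_eq_zero _
  refine ⟨hCC', P, hP, isTorsionFreeRankOneOver_of_generator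
    (x := Submodule.Quotient.mk ⟨x, hxC'⟩) (hmk_zero.not.2 hxC) (fun p hp => ?_)
    (fun r hr q hrq => ?_) (fun q => ?_)⟩
  · rw [← Submodule.Quotient.mk_smul, hmk_zero]
    exact hPx p hp
  · obtain ⟨y, rfl⟩ := Submodule.Quotient.mk_surjective _ q
    rw [← Submodule.Quotient.mk_smul, hmk_zero] at hrq
    exact hmk_zero.2 (hsat ⟨y.2.1, mem_saturation.2 ⟨r, hr, hrq⟩⟩)
  · obtain ⟨y, rfl⟩ := Submodule.Quotient.mk_surjective _ q
    obtain ⟨s, hs, hsy⟩ := mem_saturation.1 y.2.2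
    obtain ⟨c, hc, _, hrx, hcr⟩ := mem_sup.1 hsy
    obtain ⟨r, rfl⟩ := mem_span_singleton.1 hrx
    refine ⟨s, hs, r, ?_⟩
    rw [← Submodule.Quotient.mk_smul, ← Submodule.Quotient.mk_smul, Submodule.Quotient.eq,
      mem_comap]
    simpa [← hcr] using hc

section Noetherian

variable [IsNoetherianRing R]

theorem exists_notMem_forall_smul_mem_of_mem_minimalPrimes {P : Ideal R} [P.IsPrime]
    {N C : Submodule R F} (hPmin : P ∈ N.annihilator.minimalPrimes)
    (hsat : N ⊓ C.saturation P.primeCompl ≤ C) (hNC : ¬N ≤ C) :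
    ∃ x ∈ N, x ∉ C ∧ ∀ p ∈ P, p • x ∈ C := by
  have : Nontrivial (N ⧸ C.comap N.subtype) := by
    rwa [Submodule.Quotient.nontrivial_iff, Ne, comap_subtype_eq_top]
  obtain ⟨Q, hQ⟩ := associatedPrimes.nonempty R (N ⧸ C.comap N.subtype)
  obtain ⟨hQ, x', hQx⟩ := isAssociatedPrime_iff.1 hQ
  obtain ⟨⟨x, hxN⟩, rfl⟩ := Submodule.Quotient.mk_surjective _ x'
  have hmem {r : R} : r ∈ Q ↔ r • x ∈ C := by
    rw [hQx, mem_colon_singleton, mem_bot, ← Submodule.Quotient.mk_smul,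
      Submodule.Quotient.mk_eq_zero]
    rfl
  have hxC : x ∉ C := fun hxC => hQ.one_notMem (hmem.2 (by rwa [one_smul]))
  have hQP : Q ≤ P := fun r hr => by
    by_contra hrP
    exact hxC (hsat ⟨hxN, mem_saturation.2 ⟨r, hrP, hmem.1 hr⟩⟩)
  have hNQ : N.annihilator ≤ Q := fun r hr =>
    hmem.2 (by rw [mem_annihilator.1 hr x hxN]; exact C.zero_mem)
  exact ⟨x, hxN, hxC, fun p hp => hmem.1 (hPmin.2 ⟨hQ, hNQ⟩ hQP hp)⟩

variable [Module.Finite R F]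

theorem reflTransGen_isDevissageStep_of_saturated {P : Ideal R} [P.IsPrime] {N : Submodule R F}
    (hPmin : P ∈ N.annihilator.minimalPrimes) {C : Submodule R F} (hCN : C ≤ N)
    (hsat : N ⊓ C.saturation P.primeCompl ≤ C) : ReflTransGen IsDevissageStep C N := by
  have hP : P ∈ associatedPrimes R F := associatedPrimes.subset_of_injective N.injective_subtype
    (Module.associatedPrimes.minimalPrimes_annihilator_subset_associatedPrimes R N hPmin)
  induction C using WellFoundedGT.induction with
  | _ C ih =>
  by_cases hNC : N ≤ C
  · exact le_antisymm hCN hNC ▸ .refl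
  obtain ⟨x, hxN, hxC, hPx⟩ := exists_notMem_forall_smul_mem_of_mem_minimalPrimes hPmin hsat hNC
  have hstep := isDevissageStep_inf_saturation_sup_span hP hCN hsat hxN hxC hPx
  exact .head hstep (ih _ hstep.lt inf_le_left inf_saturation_inf_saturation_le)

theorem annihilator_lt_annihilator_inf_saturation_bot {P : Ideal R} [P.IsPrime]
    {N : Submodule R F} (hPmin : P ∈ N.annihilator.minimalPrimes) :
    N.annihilator < (N ⊓ (⊥ : Submodule R F).saturation P.primeCompl).annihilator := by
  set T := N ⊓ (⊥ : Submodule R F).saturation P.primeCompl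
  refine lt_of_le_not_ge (annihilator_mono inf_le_left) fun hle => ?_
  have hT : ⟨P, ‹_›⟩ ∉ Module.support R T := Module.notMem_support_iff'.2 fun y => by
    obtain ⟨s, hs, hsy⟩ := mem_saturation.1 y.2.2
    exact ⟨s, hs, Subtype.ext ((mem_bot R).1 hsy)⟩
  exact hT (Module.mem_support_iff_of_finite.2 (hle.trans hPmin.1.2))

theorem reflTransGen_isDevissageStep_bot (N : Submodule R F) :
    ReflTransGen IsDevissageStep ⊥ N := by
  refine (InvImage.wf annihilator wellFounded_gt).induction N fun N ih => ?_
  rcases eq_or_ne N ⊥ with rfl | hN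
  · exact .refl
  obtain ⟨P, hPmin⟩ := Ideal.nonempty_minimalPrimes (mt annihilator_eq_top_iff.1 hN)
  have := hPmin.1.1
  exact (ih _ (annihilator_lt_annihilator_inf_saturation_bot hPmin)).trans
    (reflTransGen_isDevissageStep_of_saturated hPmin inf_le_left inf_saturation_inf_saturation_le)

end Noetherian

/-- **Dévissage.** A finite module over a Noetherian ring has a filtration whose successive
quotients are nonzero torsion-free rank-1 modules over `R/P` for associated primes `P` of `F`. -/
theorem devissage (R : Type) [CommRing R] [IsNoetherianRing R]
    (F : Type) [AddCommGroup F] [Module R F] [Module.Finite R F] :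
    ∃ (n : ℕ) (c : Fin (n + 1) → Submodule R F), Monotone c ∧ c 0 = ⊥ ∧ c (Fin.last n) = ⊤ ∧
      ∀ i : Fin n, ∃ P ∈ associatedPrimes R F,
        let Q := (c i.succ) ⧸ (Submodule.comap (c i.succ).subtype (c i.castSucc))
        -- the quotient is a nonzero, torsion-free, rank-1 module over `R/P`:
        Nontrivial Q ∧
        (∀ r : R, r ∈ P → ∀ q : Q, r • q = 0) ∧
        (∀ r : R, r ∉ P → ∀ q : Q, r • q = 0 → q = 0) ∧
        (∀ x y : Q, ∃ a b : R, a ∉ P ∧ (a • x = b • y ∨ a • y = b • x)) := by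
  obtain ⟨s, hhead, hlast⟩ :=
    (reflTransGen_isDevissageStep_bot (⊤ : Submodule R F)).exists_relSeries
  exact ⟨s.length, s, Fin.monotone_iff_le_succ.2 fun i => (s.step i).1, hhead, hlast,
    fun i => (s.step i).2⟩
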